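/- Let $P: \mathbb{C}^2 \to \mathbb{C}$ be given by $P(z_1,z_2) = az_1^2 + bz_2^2 + cz_1z_2$ with $a,b,c \in \{-1,1\}$, and let $\|P\| = \sup\{|P(z_1,z_2)| : |z_1| \le 1, |z_2| \le 1\}$. Then $\|P\| \in \{3, \sqrt{5}\}$; specifically $\|P\| = 3$ if $ab > 0$ and $\|P\| = \sqrt{5}$ if $ab < 0$. -/

import Mathlib

/-!
Since `a = ±1`, multiplying `P` by `a` leaves `‖P‖` unchanged and turns it into
`z₁² ± z₂² + t z₁ z₂` with `|t| = 1`. For the plus sign the triangle inequality gives `2 + |t|`,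
attained at `(1, ±1)`. For the minus sign a sum-of-squares identity gives
`|z₁² - z₂² + t z₁ z₂| ≤ √(4 + t²) (|z₁|² + |z₂|²) / 2`, with equality at `(1, i)`.
-/

open Complex ComplexConjugate

noncomputable def bidiscSupNorm (P : ℂ → ℂ → ℂ) : ℝ :=
  sSup {x : ℝ | ∃ z₁ z₂ : ℂ, ‖z₁‖ ≤ 1 ∧ ‖z₂‖ ≤ 1 ∧ x = ‖P z₁ z₂‖}

section

variable {P Q : ℂ → ℂ → ℂ}

theorem bidiscSupNorm_eq_of_le_of_norm_eq {M : ℝ}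
    (hle : ∀ z₁ z₂ : ℂ, ‖z₁‖ ≤ 1 → ‖z₂‖ ≤ 1 → ‖P z₁ z₂‖ ≤ M)
    {w₁ w₂ : ℂ} (hw₁ : ‖w₁‖ ≤ 1) (hw₂ : ‖w₂‖ ≤ 1) (hM : ‖P w₁ w₂‖ = M) :
    bidiscSupNorm P = M := by
  refine IsGreatest.csSup_eq ⟨⟨w₁, w₂, hw₁, hw₂, hM.symm⟩, ?_⟩
  rintro x ⟨z₁, z₂, h₁, h₂, rfl⟩
  exact hle z₁ z₂ h₁ h₂

theorem bidiscSupNorm_congr_norm (h : ∀ z₁ z₂ : ℂ, ‖P z₁ z₂‖ = ‖Q z₁ z₂‖) :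
    bidiscSupNorm P = bidiscSupNorm Q := by
  simp only [bidiscSupNorm, h]

end

theorem norm_quadratic_eq_of_abs_eq_one {a : ℝ} (ha : |a| = 1) (b c : ℝ) (z₁ z₂ : ℂ) :
    ‖(a : ℂ) * z₁ ^ 2 + b * z₂ ^ 2 + c * z₁ * z₂‖ =
      ‖z₁ ^ 2 + ((a * b : ℝ) : ℂ) * z₂ ^ 2 + ((a * c : ℝ) : ℂ) * z₁ * z₂‖ := by
  have ha' : (a : ℂ) ^ 2 = 1 := by exact_mod_cast (sq_abs a).symm.trans (by rw [ha, one_pow])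
  calc ‖(a : ℂ) * z₁ ^ 2 + b * z₂ ^ 2 + c * z₁ * z₂‖
      = ‖(a : ℂ) * (z₁ ^ 2 + ((a * b : ℝ) : ℂ) * z₂ ^ 2 + ((a * c : ℝ) : ℂ) * z₁ * z₂)‖ := by
        congr 1
        push_cast
        linear_combination (-(b * z₂ ^ 2) - c * z₁ * z₂) * ha'
    _ = _ := by rw [norm_mul, norm_real, Real.norm_eq_abs, ha, one_mul]

theorem bidiscSupNorm_sq_add_sq_add_mul (t : ℝ) :
    bidiscSupNorm (fun z₁ z₂ => z₁ ^ 2 + z₂ ^ 2 + t * z₁ * z₂) = 2 + |t| := by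
  obtain ⟨σ, hσ, hσt⟩ : ∃ σ : ℝ, |σ| = 1 ∧ σ * t = |t| := by
    rcases le_total 0 t with ht | ht
    · exact ⟨1, by norm_num, by rw [one_mul, abs_of_nonneg ht]⟩
    · exact ⟨-1, by norm_num, by rw [neg_one_mul, abs_of_nonpos ht]⟩
  have hσ_norm : ‖(σ : ℂ)‖ = 1 := by rw [norm_real, Real.norm_eq_abs, hσ]
  have hσ_sq : (σ : ℂ) ^ 2 = 1 := by exact_mod_cast (sq_abs σ).symm.trans (by rw [hσ, one_pow])
  refine bidiscSupNorm_eq_of_le_of_norm_eq (fun z₁ z₂ h₁ h₂ => ?_) (w₁ := 1) (w₂ := σ)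
    norm_one.le hσ_norm.le ?_
  · calc ‖z₁ ^ 2 + z₂ ^ 2 + t * z₁ * z₂‖
        ≤ ‖z₁ ^ 2‖ + ‖z₂ ^ 2‖ + ‖t * z₁ * z₂‖ := norm_add₃_le
      _ = ‖z₁‖ ^ 2 + ‖z₂‖ ^ 2 + |t| * ‖z₁‖ * ‖z₂‖ := by
        rw [norm_pow, norm_pow, norm_mul, norm_mul, norm_real, Real.norm_eq_abs]
      _ ≤ 1 ^ 2 + 1 ^ 2 + |t| * 1 * 1 := by gcongr
      _ = 2 + |t| := by ring
  · have : (1 : ℂ) ^ 2 + (σ : ℂ) ^ 2 + t * 1 * σ = ((2 + |t| : ℝ) : ℂ) := by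
      rw [← hσt]
      push_cast
      linear_combination hσ_sq
    rw [this, norm_real, Real.norm_of_nonneg (by positivity)]

theorem norm_sq_sub_sq_add_mul_mul_le (t : ℝ) (z₁ z₂ : ℂ) :
    ‖z₁ ^ 2 - z₂ ^ 2 + t * z₁ * z₂‖ ≤ √(4 + t ^ 2) * ((‖z₁‖ ^ 2 + ‖z₂‖ ^ 2) / 2) := by
  have hsos : 4 * ‖z₁ ^ 2 - z₂ ^ 2 + t * z₁ * z₂‖ ^ 2 +
      (4 * (z₁ * conj z₂).re - t * (‖z₁‖ ^ 2 - ‖z₂‖ ^ 2)) ^ 2 =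
      (4 + t ^ 2) * (‖z₁‖ ^ 2 + ‖z₂‖ ^ 2) ^ 2 := by
    simp only [Complex.sq_norm]
    simp only [normSq_apply, add_re, add_im, sub_re, sub_im, mul_re, mul_im,
      ofReal_re, ofReal_im, conj_re, conj_im, pow_two]
    ring
  have hsq : ‖z₁ ^ 2 - z₂ ^ 2 + t * z₁ * z₂‖ ^ 2 ≤
      (√(4 + t ^ 2) * ((‖z₁‖ ^ 2 + ‖z₂‖ ^ 2) / 2)) ^ 2 := by
    rw [mul_pow, Real.sq_sqrt (by positivity)]
    nlinarith [sq_nonneg (4 * (z₁ * conj z₂).re - t * (‖z₁‖ ^ 2 - ‖z₂‖ ^ 2))]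
  exact le_of_sq_le_sq hsq (by positivity)

theorem bidiscSupNorm_sq_sub_sq_add_mul (t : ℝ) :
    bidiscSupNorm (fun z₁ z₂ => z₁ ^ 2 - z₂ ^ 2 + t * z₁ * z₂) = √(4 + t ^ 2) := by
  refine bidiscSupNorm_eq_of_le_of_norm_eq (fun z₁ z₂ h₁ h₂ => ?_) (w₁ := 1) (w₂ := I)
    norm_one.le norm_I.le ?_
  · calc ‖z₁ ^ 2 - z₂ ^ 2 + t * z₁ * z₂‖
        ≤ √(4 + t ^ 2) * ((‖z₁‖ ^ 2 + ‖z₂‖ ^ 2) / 2) := norm_sq_sub_sq_add_mul_mul_le t z₁ z₂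
      _ ≤ √(4 + t ^ 2) * ((1 ^ 2 + 1 ^ 2) / 2) := by gcongr
      _ = √(4 + t ^ 2) := by norm_num
  · have : (1 : ℂ) ^ 2 - I ^ 2 + t * 1 * I = (2 : ℝ) + t * I := by
      push_cast
      linear_combination -I_sq
    rw [this, norm_add_mul_I]
    norm_num

theorem bernoulli_poly_norm (a b c : ℝ)
    (ha : a = -1 ∨ a = 1) (hb : b = -1 ∨ b = 1) (hc : c = -1 ∨ c = 1) :
    ((sSup {x : ℝ | ∃ z₁ z₂ : ℂ, ‖z₁‖ ≤ 1 ∧ ‖z₂‖ ≤ 1 ∧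
        x = ‖(a : ℂ) * z₁ ^ 2 + (b : ℂ) * z₂ ^ 2 + (c : ℂ) * z₁ * z₂‖} = 3 ∨
      sSup {x : ℝ | ∃ z₁ z₂ : ℂ, ‖z₁‖ ≤ 1 ∧ ‖z₂‖ ≤ 1 ∧
        x = ‖(a : ℂ) * z₁ ^ 2 + (b : ℂ) * z₂ ^ 2 + (c : ℂ) * z₁ * z₂‖} = Real.sqrt 5) ∧
      (a * b > 0 → sSup {x : ℝ | ∃ z₁ z₂ : ℂ, ‖z₁‖ ≤ 1 ∧ ‖z₂‖ ≤ 1 ∧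
        x = ‖(a : ℂ) * z₁ ^ 2 + (b : ℂ) * z₂ ^ 2 + (c : ℂ) * z₁ * z₂‖} = 3) ∧
      (a * b < 0 → sSup {x : ℝ | ∃ z₁ z₂ : ℂ, ‖z₁‖ ≤ 1 ∧ ‖z₂‖ ≤ 1 ∧
        x = ‖(a : ℂ) * z₁ ^ 2 + (b : ℂ) * z₂ ^ 2 + (c : ℂ) * z₁ * z₂‖} = Real.sqrt 5)) := by
  change (bidiscSupNorm _ = 3 ∨ bidiscSupNorm _ = √5) ∧
    (_ → bidiscSupNorm _ = 3) ∧ (_ → bidiscSupNorm _ = √5)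
  have ha_abs : |a| = 1 := by rcases ha with rfl | rfl <;> norm_num
  have hac_abs : |a * c| = 1 := by rcases ha with rfl | rfl <;> rcases hc with rfl | rfl <;> norm_num
  have hab : a * b = 1 ∨ a * b = -1 := by
    rcases ha with rfl | rfl <;> rcases hb with rfl | rfl <;> norm_num
  rw [bidiscSupNorm_congr_norm (norm_quadratic_eq_of_abs_eq_one ha_abs b c)]
  rcases hab with hab | hab
  · rw [hab]
    simp only [ofReal_one, one_mul]
    rw [bidiscSupNorm_sq_add_sq_add_mul, hac_abs]
    norm_num [hab]
  · rw [hab]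
    simp only [ofReal_neg, ofReal_one, neg_one_mul, ← sub_eq_add_neg]
    rw [bidiscSupNorm_sq_sub_sq_add_mul, ← sq_abs, hac_abs]
    norm_num [hab]
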